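/- arXiv:2211.15776 — 3 statements merged into one kernel-verified Lean document; each statement's English description precedes it below -/
import Mathlib

section
/- An orthogonal Latin square of order d gives rise to a tensor in 𝒫(4,d): if (A,B) is a pair of d×d matrices with entries in {1,…,d} forming an orthogonal Latin square, then the tensor Φ with Φ_{ijkl} = δ_{a_{kl},i} δ_{b_{kl},j} has all three flattenings F₁(Φ), F₂(Φ), F₃(Φ) equal to permutation matrices, hence unitary. -/
open Matrix

/-- Flattening grouping indices (1,2)|(3,4). -/
def F1 {d : ℕ} (Φ : Fin d → Fin d → Fin d → Fin d → ℂ) :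
    Matrix (Fin d × Fin d) (Fin d × Fin d) ℂ :=
  fun p q => Φ p.1 p.2 q.1 q.2

/-- Flattening grouping indices (1,3)|(2,4). -/
def F2 {d : ℕ} (Φ : Fin d → Fin d → Fin d → Fin d → ℂ) :
    Matrix (Fin d × Fin d) (Fin d × Fin d) ℂ :=
  fun p q => Φ p.1 q.1 p.2 q.2

/-- Flattening grouping indices (1,4)|(2,3). -/
def F3 {d : ℕ} (Φ : Fin d → Fin d → Fin d → Fin d → ℂ) :
    Matrix (Fin d × Fin d) (Fin d × Fin d) ℂ :=
  fun p q => Φ p.1 q.1 q.2 p.2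

/-- A matrix is a permutation matrix. -/
def IsPermMatrix {ι : Type*} [DecidableEq ι] (M : Matrix ι ι ℂ) : Prop :=
  ∃ σ : Equiv.Perm ι, ∀ p q, M p q = if σ q = p then 1 else 0

/-- A Latin square: each row and column is a bijection. -/
def IsLatinSquare {α : Type*} (A : α → α → α) : Prop :=
  (∀ i, Function.Bijective (A i)) ∧ (∀ j, Function.Bijective (fun i => A i j))

/-- An orthogonal Latin square: a pair of Latin squares whose entrywise
pairs are pairwise distinct. -/
def IsOLS {α : Type*} (A B : α → α → α) : Prop :=
  IsLatinSquare A ∧ IsLatinSquare B ∧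
    Function.Injective (fun p : α × α => (A p.1 p.2, B p.1 p.2))

/-!
The tensor `Φ` is the indicator of the `d²` points `(A k l, B k l, k, l)`, parametrised by
`(k, l)`. A flattening pairing two of the four coordinates against the other two is therefore
a permutation matrix as soon as both pairs, viewed as functions of `(k, l)`, are bijections;
for `F₁` this is orthogonality, for `F₂` and `F₃` it is the row or column property of `A`
and of `B`. Permutation matrices are unitary.
-/

lemma Equiv.Perm.permMatrix_mem_unitaryGroup {n R : Type*} [DecidableEq n] [Fintype n]
    [CommRing R] [StarRing R] (σ : Equiv.Perm n) : σ.permMatrix R ∈ unitaryGroup n R := by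
  rw [mem_unitaryGroup_iff, star_eq_conjTranspose, conjTranspose_permMatrix, ← permMatrix_mul,
    inv_mul_cancel, permMatrix_one]

section PermMatrix

variable {ι : Type*} [DecidableEq ι] {M : Matrix ι ι ℂ}

lemma IsPermMatrix.exists_eq_permMatrix (h : IsPermMatrix M) :
    ∃ σ : Equiv.Perm ι, M = σ.permMatrix ℂ := by
  obtain ⟨σ, hσ⟩ := h
  refine ⟨σ⁻¹, Matrix.ext fun p q => ?_⟩
  simp only [hσ, PEquiv.toMatrix_apply, Equiv.toPEquiv_apply, Option.mem_def,
    Option.some.injEq, Equiv.Perm.inv_eq_iff_eq, eq_comm (a := p)]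

lemma IsPermMatrix.mem_unitaryGroup [Fintype ι] (h : IsPermMatrix M) : M ∈ unitaryGroup ι ℂ := by
  obtain ⟨σ, rfl⟩ := h.exists_eq_permMatrix
  exact σ.permMatrix_mem_unitaryGroup

lemma IsPermMatrix.of_equiv {κ : Type*} (r c : κ ≃ ι)
    (h : ∀ s p, M p (c s) = if r s = p then 1 else 0) : IsPermMatrix M :=
  ⟨c.symm.trans r, fun p q => by rw [Equiv.trans_apply, ← h, c.apply_symm_apply]⟩

end PermMatrix

namespace IsLatinSquare

variable {α : Type*} {A : α → α → α}

noncomputable def rowEquiv (hA : IsLatinSquare A) : α × α ≃ α × α :=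
  (Equiv.prodShear (Equiv.refl α) fun k => Equiv.ofBijective (A k) (hA.1 k)).trans
    (Equiv.prodComm α α)

noncomputable def colEquiv (hA : IsLatinSquare A) : α × α ≃ α × α :=
  (Equiv.prodComm α α).trans <|
    (Equiv.prodShear (Equiv.refl α) fun l => Equiv.ofBijective (A · l) (hA.2 l)).trans
      (Equiv.prodComm α α)

@[simp]
lemma rowEquiv_apply (hA : IsLatinSquare A) (k l : α) : hA.rowEquiv (k, l) = (A k l, k) := rfl

@[simp]
lemma colEquiv_apply (hA : IsLatinSquare A) (k l : α) : hA.colEquiv (k, l) = (A k l, l) := rfl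

end IsLatinSquare

noncomputable def IsOLS.pairEquiv {α : Type*} [Finite α] {A B : α → α → α} (hAB : IsOLS A B) :
    α × α ≃ α × α :=
  Equiv.ofBijective _ (Finite.injective_iff_bijective.mp hAB.2.2)

@[simp]
lemma IsOLS.pairEquiv_apply {α : Type*} [Finite α] {A B : α → α → α} (hAB : IsOLS A B) (k l : α) :
    hAB.pairEquiv (k, l) = (A k l, B k l) := rfl

section Flattenings

variable {d : ℕ} {A B : Fin d → Fin d → Fin d} {Φ : Fin d → Fin d → Fin d → Fin d → ℂ}

lemma isPermMatrix_F1 (hAB : IsOLS A B)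
    (hΦ : ∀ i j k l, Φ i j k l = if A k l = i ∧ B k l = j then 1 else 0) :
    IsPermMatrix (F1 Φ) :=
  .of_equiv hAB.pairEquiv (Equiv.refl _) fun ⟨k, l⟩ ⟨i, j⟩ => by
    simp [F1, hΦ, Prod.ext_iff]

lemma isPermMatrix_F2 (hA : IsLatinSquare A) (hB : IsLatinSquare B)
    (hΦ : ∀ i j k l, Φ i j k l = if A k l = i ∧ B k l = j then 1 else 0) :
    IsPermMatrix (F2 Φ) :=
  .of_equiv hA.rowEquiv hB.colEquiv fun ⟨k, l⟩ ⟨i, k'⟩ => by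
    simp only [F2, hΦ, IsLatinSquare.rowEquiv_apply, IsLatinSquare.colEquiv_apply,
      (hB.2 l).injective.eq_iff, Prod.mk.injEq]
    congr 1
    grind

lemma isPermMatrix_F3 (hA : IsLatinSquare A) (hB : IsLatinSquare B)
    (hΦ : ∀ i j k l, Φ i j k l = if A k l = i ∧ B k l = j then 1 else 0) :
    IsPermMatrix (F3 Φ) :=
  .of_equiv hA.colEquiv hB.rowEquiv fun ⟨k, l⟩ ⟨i, l'⟩ => by
    simp only [F3, hΦ, IsLatinSquare.rowEquiv_apply, IsLatinSquare.colEquiv_apply,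
      (hB.1 k).injective.eq_iff, Prod.mk.injEq]
    congr 1
    grind

end Flattenings

theorem ols_gives_perfect_tensor {d : ℕ} (A B : Fin d → Fin d → Fin d)
    (hAB : IsOLS A B)
    (Φ : Fin d → Fin d → Fin d → Fin d → ℂ)
    (hΦ : ∀ i j k l, Φ i j k l = if A k l = i ∧ B k l = j then 1 else 0) :
    (IsPermMatrix (F1 Φ) ∧ IsPermMatrix (F2 Φ) ∧ IsPermMatrix (F3 Φ)) ∧
    (F1 Φ ∈ Matrix.unitaryGroup (Fin d × Fin d) ℂ ∧
     F2 Φ ∈ Matrix.unitaryGroup (Fin d × Fin d) ℂ ∧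
     F3 Φ ∈ Matrix.unitaryGroup (Fin d × Fin d) ℂ) := by
  have h₁ := isPermMatrix_F1 hAB hΦ
  have h₂ := isPermMatrix_F2 hAB.1 hAB.2.1 hΦ
  have h₃ := isPermMatrix_F3 hAB.1 hAB.2.1 hΦ
  exact ⟨⟨h₁, h₂, h₃⟩, h₁.mem_unitaryGroup, h₂.mem_unitaryGroup, h₃.mem_unitaryGroup⟩
end

section
/- Conversely, if Φ ∈ (ℂ^d)^⊗4 is a tensor such that all three flattenings F₁(Φ), F₂(Φ), F₃(Φ) are permutation matrices, then there exists an orthogonal Latin square (A,B) of order d such that Φ_{ijkl} = δ_{a_{kl},i} δ_{b_{kl},j}. -/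
open Matrix

/-!
If `F₁(Φ)` is the permutation matrix of `σ`, then `Φ` is the 0/1 tensor supported on the graph
`{(σ(k,l), k, l)}`; writing `σ(k,l) = (a_{kl}, b_{kl})` gives `A` and `B`, orthogonal because `σ` is
injective. A permutation matrix has a single nonzero entry in each row and column: for `F₂(Φ)` this
makes the rows of `A` and the columns of `B` injective, for `F₃(Φ)` the columns of `A` and the rows
of `B`. Over a finite alphabet injective rows and columns are bijective.
-/

open Function

namespace IsPermMatrix

variable {ι : Type*} [DecidableEq ι] {M : Matrix ι ι ℂ}

theorem eq_of_apply_ne_zero_right (hM : IsPermMatrix M) {p q q' : ι} (h : M p q ≠ 0)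
    (h' : M p q' ≠ 0) : q = q' := by
  obtain ⟨σ, hσ⟩ := hM
  simp only [hσ, ne_eq, ite_eq_right_iff, one_ne_zero, imp_false, not_not] at h h'
  exact σ.injective (h.trans h'.symm)

theorem eq_of_apply_ne_zero_left (hM : IsPermMatrix M) {p p' q : ι} (h : M p q ≠ 0)
    (h' : M p' q ≠ 0) : p = p' := by
  obtain ⟨σ, hσ⟩ := hM
  simp only [hσ, ne_eq, ite_eq_right_iff, one_ne_zero, imp_false, not_not] at h h'
  exact h.symm.trans h'

end IsPermMatrix

theorem isLatinSquare_of_injective {α : Type*} [Finite α] {A : α → α → α}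
    (hrow : ∀ i, Injective (A i)) (hcol : ∀ j, Injective fun i => A i j) : IsLatinSquare A :=
  ⟨fun i => (hrow i).bijective_of_finite, fun j => (hcol j).bijective_of_finite⟩

def latinTensor {α : Type*} [DecidableEq α] (A B : α → α → α) : α → α → α → α → ℂ :=
  fun i j k l => if A k l = i ∧ B k l = j then 1 else 0

theorem latinTensor_apply_self_ne_zero {α : Type*} [DecidableEq α] (A B : α → α → α) (k l : α) :
    latinTensor A B (A k l) (B k l) k l ≠ 0 := by
  simp [latinTensor]

section Flattenings

variable {d : ℕ}

theorem exists_latinTensor_of_isPermMatrix_F1 {Φ : Fin d → Fin d → Fin d → Fin d → ℂ}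
    (h1 : IsPermMatrix (F1 Φ)) :
    ∃ A B : Fin d → Fin d → Fin d,
      Injective (fun p : Fin d × Fin d => (A p.1 p.2, B p.1 p.2)) ∧ Φ = latinTensor A B := by
  obtain ⟨σ, hσ⟩ := h1
  refine ⟨fun k l => (σ (k, l)).1, fun k l => (σ (k, l)).2, σ.injective, ?_⟩
  ext i j k l
  simpa [F1, latinTensor, Prod.ext_iff] using hσ (i, j) (k, l)

variable {A B : Fin d → Fin d → Fin d}

theorem injective_of_isPermMatrix_F2_latinTensor (h2 : IsPermMatrix (F2 (latinTensor A B))) :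
    (∀ k, Injective (A k)) ∧ ∀ l, Injective fun k => B k l := by
  refine ⟨fun k l l' h => ?_, fun l k k' h => ?_⟩
  · have := h2.eq_of_apply_ne_zero_right (p := (A k l, k)) (q := (B k l, l))
      (q' := (B k l', l')) (latinTensor_apply_self_ne_zero A B k l)
      (by rw [h]; exact latinTensor_apply_self_ne_zero A B k l')
    exact congrArg Prod.snd this
  · have := h2.eq_of_apply_ne_zero_left (q := (B k l, l)) (p := (A k l, k))
      (p' := (A k' l, k')) (latinTensor_apply_self_ne_zero A B k l)
      (by simp only at h; rw [h]; exact latinTensor_apply_self_ne_zero A B k' l)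
    exact congrArg Prod.snd this

theorem injective_of_isPermMatrix_F3_latinTensor (h3 : IsPermMatrix (F3 (latinTensor A B))) :
    (∀ l, Injective fun k => A k l) ∧ ∀ k, Injective (B k) := by
  refine ⟨fun l k k' h => ?_, fun k l l' h => ?_⟩
  · have := h3.eq_of_apply_ne_zero_right (p := (A k l, l)) (q := (B k l, k))
      (q' := (B k' l, k')) (latinTensor_apply_self_ne_zero A B k l)
      (by simp only at h; rw [h]; exact latinTensor_apply_self_ne_zero A B k' l)
    exact congrArg Prod.snd this
  · have := h3.eq_of_apply_ne_zero_left (q := (B k l, k)) (p := (A k l, l))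
      (p' := (A k l', l')) (latinTensor_apply_self_ne_zero A B k l)
      (by rw [h]; exact latinTensor_apply_self_ne_zero A B k l')
    exact congrArg Prod.snd this

end Flattenings

theorem perm_flattenings_give_ols {d : ℕ}
    (Φ : Fin d → Fin d → Fin d → Fin d → ℂ)
    (h1 : IsPermMatrix (F1 Φ)) (h2 : IsPermMatrix (F2 Φ))
    (h3 : IsPermMatrix (F3 Φ)) :
    ∃ A B : Fin d → Fin d → Fin d, IsOLS A B ∧
      ∀ i j k l, Φ i j k l = if A k l = i ∧ B k l = j then 1 else 0 := by
  obtain ⟨A, B, horth, rfl⟩ := exists_latinTensor_of_isPermMatrix_F1 h1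
  obtain ⟨hArow, hBcol⟩ := injective_of_isPermMatrix_F2_latinTensor h2
  obtain ⟨hAcol, hBrow⟩ := injective_of_isPermMatrix_F3_latinTensor h3
  exact ⟨A, B, ⟨isLatinSquare_of_injective hArow hAcol,
    isLatinSquare_of_injective hBrow hBcol, horth⟩, fun _ _ _ _ => rfl⟩
end

section
/- If Φ ∈ (ℂ^d)^⊗n (with n even) is a tensor such that for every bipartition (I,J) of {1,…,n} with |I| = |J| = n/2 the flattening Φ_{I,J} is unitary, then for every bipartition (I,J) with |I| ≤ |J|, the map Φ_{I,J} is proportional to an isometry; i.e., Φ is a perfect tensor. -/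
/-!
Given `I` with `|I| ≤ |Iᶜ|`, enlarge it to a set `J ⊇ I` of size `n/2`. The rows of `Φ_{I,Iᶜ}`
are indexed by pairs `(a, b)` of assignments on `J \ I` and on `Jᶜ`, and `Φ_{I,Iᶜ}(a, b; c)`
is the entry `Φ_{J,Jᶜ}(b; (c, a))`. Summing over `b` first, the isometry property of `Φ_{J,Jᶜ}`
gives `(Φ_{I,Iᶜ}ᴴ Φ_{I,Iᶜ})(c, c') = ∑_a δ_{c,c'} = d^{|J \ I|} δ_{c,c'}`.
-/

open Matrix

/-- The flattening of a tensor `Φ ∈ (ℂ^d)^⊗n` along the bipartition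
`(I, Iᶜ)`: a matrix from the `I`-indices to the `Iᶜ`-indices. -/
def flatten {n d : ℕ} (Φ : (Fin n → Fin d) → ℂ) (I : Finset (Fin n)) :
    Matrix ({i : Fin n // i ∉ I} → Fin d) ({i : Fin n // i ∈ I} → Fin d) ℂ :=
  fun r c => Φ (fun i => if h : i ∈ I then c ⟨i, h⟩ else r ⟨i, h⟩)

open Finset

section Splitting

variable {α β : Type*} [DecidableEq α] {I J : Finset α}

def notMemEquivSdiffSumNotMem (hIJ : I ⊆ J) :
    {i // i ∉ I} ≃ {i // i ∈ J \ I} ⊕ {i // i ∉ J} where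
  toFun x := if h : x.1 ∈ J then .inl ⟨x.1, mem_sdiff.2 ⟨h, x.2⟩⟩ else .inr ⟨x.1, h⟩
  invFun y := y.elim (fun z => ⟨z.1, (mem_sdiff.1 z.2).2⟩) (fun z => ⟨z.1, fun hz => z.2 (hIJ hz)⟩)
  left_inv x := by by_cases h : x.1 ∈ J <;> simp [h]
  right_inv y := by
    cases y with
    | inl z => simp [(mem_sdiff.1 z.2).1]
    | inr z => simp [z.2]

def piNotMemEquivProd (hIJ : I ⊆ J) :
    ({i // i ∉ I} → β) ≃ ({i // i ∈ J \ I} → β) × ({i // i ∉ J} → β) :=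
  (Equiv.arrowCongr (notMemEquivSdiffSumNotMem hIJ) (Equiv.refl β)).trans
    (Equiv.sumArrowEquivProdArrow _ _ _)

def piMergeSdiff (c : {i // i ∈ I} → β) (a : {i // i ∈ J \ I} → β) : {i // i ∈ J} → β :=
  fun i => if h : i.1 ∈ I then c ⟨i.1, h⟩ else a ⟨i.1, mem_sdiff.2 ⟨i.2, h⟩⟩

lemma piMergeSdiff_left_injective (hIJ : I ⊆ J) (a : {i // i ∈ J \ I} → β) :
    Function.Injective fun c : {i // i ∈ I} → β => piMergeSdiff c a := by
  intro c c' hcc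
  funext i
  simpa [piMergeSdiff, i.2] using congrFun hcc ⟨i.1, hIJ i.2⟩

end Splitting

section Flattening

variable {n d : ℕ} (Φ : (Fin n → Fin d) → ℂ) {I J : Finset (Fin n)}

lemma flatten_piNotMemEquivProd_symm (hIJ : I ⊆ J) (a : {i // i ∈ J \ I} → Fin d)
    (b : {i // i ∉ J} → Fin d) (c : {i // i ∈ I} → Fin d) :
    flatten Φ I ((piNotMemEquivProd hIJ).symm (a, b)) c = flatten Φ J b (piMergeSdiff c a) := by
  unfold flatten
  congr 1
  funext i
  by_cases hi : i ∈ I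
  · simp [hi, hIJ hi, piMergeSdiff]
  · by_cases hj : i ∈ J <;>
      simp [hi, hj, piMergeSdiff, piNotMemEquivProd, notMemEquivSdiffSumNotMem,
        Equiv.sumArrowEquivProdArrow]

lemma conjTranspose_mul_flatten_apply_of_subset (hIJ : I ⊆ J) (c₁ c₂ : {i // i ∈ I} → Fin d) :
    ((flatten Φ I)ᴴ * flatten Φ I) c₁ c₂ =
      ∑ a, ((flatten Φ J)ᴴ * flatten Φ J) (piMergeSdiff c₁ a) (piMergeSdiff c₂ a) := by
  simp only [mul_apply, conjTranspose_apply]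
  rw [← (piNotMemEquivProd hIJ).symm.sum_comp, Fintype.sum_prod_type]
  simp only [flatten_piNotMemEquivProd_symm]

lemma conjTranspose_mul_flatten_of_subset (hIJ : I ⊆ J)
    (hJ : (flatten Φ J)ᴴ * flatten Φ J = 1) :
    (flatten Φ I)ᴴ * flatten Φ I = ((d : ℂ) ^ #(J \ I)) • 1 := by
  ext c₁ c₂
  rw [conjTranspose_mul_flatten_apply_of_subset Φ hIJ, hJ]
  simp only [one_apply, (piMergeSdiff_left_injective hIJ _).eq_iff, Matrix.smul_apply, smul_eq_mul]
  split_ifs <;> simp only [sum_const, card_univ, Fintype.card_fun, Fintype.card_coe,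
    Fintype.card_fin, nsmul_eq_mul, Nat.cast_pow, mul_one, mul_zero]

end Flattening

theorem perfect_of_balanced_unitary_general {n d : ℕ}
    (Φ : (Fin n → Fin d) → ℂ)
    (h : ∀ I : Finset (Fin n), I.card = n / 2 →
      (flatten Φ I)ᴴ * flatten Φ I = 1 ∧ flatten Φ I * (flatten Φ I)ᴴ = 1) :
    ∀ I : Finset (Fin n), I.Nonempty → Iᶜ.Nonempty → I.card ≤ Iᶜ.card →
      ∃ c : ℝ, 0 ≤ c ∧ (flatten Φ I)ᴴ * flatten Φ I = (c : ℂ) • 1 := by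
  intro I _ _ hcard
  have hI : #I ≤ n / 2 := by
    rw [card_compl, Fintype.card_fin] at hcard
    omega
  obtain ⟨J, hIJ, -, hJ⟩ :=
    exists_subsuperset_card_eq (subset_univ I) hI (by simp [Nat.div_le_self])
  refine ⟨(d : ℝ) ^ #(J \ I), by positivity, ?_⟩
  rw [conjTranspose_mul_flatten_of_subset Φ hIJ (h J hJ).1]
  push_cast
  rfl

/-- If every balanced flattening of a tensor (n even) is unitary, then every
flattening `Φ_{I,J}` with `|I| ≤ |J|` is proportional to an isometry, i.e. `Φ`
is a perfect tensor. -/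
theorem perfect_of_balanced_unitary {n d : ℕ} (hn : Even n)
    (Φ : (Fin n → Fin d) → ℂ)
    (h : ∀ I : Finset (Fin n), I.card = n / 2 →
      (flatten Φ I)ᴴ * flatten Φ I = 1 ∧ flatten Φ I * (flatten Φ I)ᴴ = 1) :
    ∀ I : Finset (Fin n), I.Nonempty → Iᶜ.Nonempty → I.card ≤ Iᶜ.card →
      ∃ c : ℝ, 0 ≤ c ∧ (flatten Φ I)ᴴ * flatten Φ I = (c : ℂ) • 1 :=
  perfect_of_balanced_unitary_general Φ h
end
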